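/- arXiv:2212.10648 — 4 statements merged into one kernel-verified Lean document; each statement's English description precedes it below -/
import Mathlib

section
/- For all u, φ ∈ V_D, the function Ku belongs to L²(ℝ) and B_D[u, φ] = −∫_Ω Ku(x) φ(x) dx; that is, the bilinear form B_D represents the negative of the nonlocal operator K against test functions in V_D. -/
/-!
Put `F(x, y) = (u(y) - u(x)) γ(x - y)`, so that `Ku(x) = ∫ F(x, y) dy`. Since `γ` is even, `F` is
antisymmetric, and exchanging `x` and `y` turns `∫∫ F(x, y) φ(y)` into `-∫∫ F(x, y) φ(x)`; hence
`B_D[u, φ] = -∫∫ F(x, y) φ(x) = -∫ Ku φ`. Fubini applies because `|u(y) φ(x)| ≤ (u(y)² + φ(x)²) / 2`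
and `u², φ²` integrated against the kernel `|γ(x - y)|` give finite integrals.
That `Ku ∈ L²` follows from `Ku = u ∗ γ - u ∫ γ` and Young's inequality `‖u ∗ γ‖₂ ≤ ‖γ‖₁ ‖u‖₂`,
which is a weighted Cauchy–Schwarz inequality integrated in `x`.
-/

open MeasureTheory Set Real

/-- The nonlocal operator `Ku(x) = ∫_ℝ (u(y) − u(x)) γ(x − y) dy`. -/
noncomputable def Knl (γ u : ℝ → ℝ) (x : ℝ) : ℝ := ∫ y, (u y - u x) * γ (x - y)

/-- The bilinear form
`B_D[u, φ] = (1/2) ∫_ℝ ∫_ℝ (u(y) − u(x)) γ(x − y) (φ(y) − φ(x)) dy dx`. -/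
noncomputable def BD (γ u φ : ℝ → ℝ) : ℝ :=
  (1 / 2) * ∫ x, ∫ y, (u y - u x) * γ (x - y) * (φ y - φ x)

/-- Membership in `V_D`: `u ∈ L²(ℝ)` and `u = 0` a.e. outside `Ω = [−L, L]`. -/
def MemVD (L : ℝ) (u : ℝ → ℝ) : Prop :=
  MemLp u 2 ∧ ∀ᵐ x : ℝ, x ∉ Icc (-L) L → u x = 0

open scoped ENNReal

theorem ENNReal.lintegral_mul_sq_le {α : Type*} [MeasurableSpace α] {μ : Measure α}
    {f w : α → ℝ≥0∞} (hf : AEMeasurable f μ) (hw : AEMeasurable w μ) :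
    (∫⁻ a, f a * w a ∂μ) ^ 2 ≤ (∫⁻ a, f a ^ 2 * w a ∂μ) * ∫⁻ a, w a ∂μ := by
  have hsqrt : ∀ a : ℝ≥0∞, (a ^ (2⁻¹ : ℝ)) ^ 2 = a := by
    simpa using ENNReal.rpow_inv_natCast_pow (n := 2) two_ne_zero
  -- `f w = (f² w)^½ w^½`, so this is Hölder with exponents `½, ½`
  have hsplit : ∀ a, (f a ^ 2 * w a) ^ (2⁻¹ : ℝ) * w a ^ (2⁻¹ : ℝ) = f a * w a := by
    intro a
    rw [← ENNReal.mul_rpow_of_nonneg _ _ (by norm_num), mul_assoc, ← sq, ← mul_pow]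
    simpa using ENNReal.pow_rpow_inv_natCast (n := 2) two_ne_zero (f a * w a)
  have holder : ∫⁻ a, f a * w a ∂μ
      ≤ (∫⁻ a, f a ^ 2 * w a ∂μ) ^ (2⁻¹ : ℝ) * (∫⁻ a, w a ∂μ) ^ (2⁻¹ : ℝ) := by
    simpa only [Pi.mul_apply, hsplit] using ENNReal.lintegral_mul_norm_pow_le (μ := μ)
      ((hf.pow_const (2 : ℕ)).mul hw) hw (p := 2⁻¹) (q := 2⁻¹)
      (by norm_num) (by norm_num) (by norm_num)
  calc (∫⁻ a, f a * w a ∂μ) ^ 2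
      ≤ ((∫⁻ a, f a ^ 2 * w a ∂μ) ^ (2⁻¹ : ℝ) * (∫⁻ a, w a ∂μ) ^ (2⁻¹ : ℝ)) ^ 2 :=
        pow_le_pow_left' holder 2
    _ = (∫⁻ a, f a ^ 2 * w a ∂μ) * ∫⁻ a, w a ∂μ := by rw [mul_pow, hsqrt, hsqrt]

namespace MeasureTheory

section Convolution

variable {G : Type*} [AddCommGroup G] [MeasurableSpace G] [MeasurableAdd₂ G] [MeasurableNeg G]
  {μ : Measure G} [SFinite μ] [μ.IsAddRightInvariant] [μ.IsNegInvariant]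

theorem Integrable.convolution_integrand_fst {f g : G → ℝ} (hf : Integrable f μ)
    (hg : Integrable g μ) :
    Integrable (fun p : G × G => f p.1 * g (p.1 - p.2)) (μ.prod μ) := by
  have h := (hf.convolution_integrand (ContinuousLinearMap.mul ℝ ℝ) hg.comp_neg).swap
  simpa [Function.comp_def, neg_sub] using h

theorem MemLp.integrable_mul_mul_sub {f h g : G → ℝ} (hf : MemLp f 2 μ) (hh : MemLp h 2 μ)
    (hg : Integrable g μ) :
    Integrable (fun p : G × G => f p.2 * h p.1 * g (p.1 - p.2)) (μ.prod μ) := by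
  have hdom : Integrable (fun p : G × G =>
      2⁻¹ * (f p.2 ^ 2 * ‖g (p.1 - p.2)‖ + h p.1 ^ 2 * ‖g (p.1 - p.2)‖)) (μ.prod μ) :=
    ((hf.integrable_sq.convolution_integrand (ContinuousLinearMap.mul ℝ ℝ) hg.norm).add
      (hh.integrable_sq.convolution_integrand_fst hg.norm)).const_mul _
  refine hdom.mono' ?_ (Filter.Eventually.of_forall fun p => ?_)
  · exact (hf.1.comp_quasiMeasurePreserving Measure.quasiMeasurePreserving_snd).mul
      (hh.1.comp_quasiMeasurePreserving Measure.quasiMeasurePreserving_fst) |>.mul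
      (hg.1.comp_quasiMeasurePreserving (quasiMeasurePreserving_sub_of_right_invariant μ μ))
  · rw [norm_mul, norm_mul, Real.norm_eq_abs, Real.norm_eq_abs]
    nlinarith [sq_nonneg (|f p.2| - |h p.1|), sq_abs (f p.2), sq_abs (h p.1),
      norm_nonneg (g (p.1 - p.2))]

variable [μ.IsAddLeftInvariant]

theorem lintegral_convolution_sq_le {f g : G → ℝ≥0∞} (hf : AEMeasurable f μ)
    (hg : AEMeasurable g μ) :
    ∫⁻ x, (∫⁻ y, f y * g (x - y) ∂μ) ^ 2 ∂μ ≤ (∫⁻ z, g z ∂μ) ^ 2 * ∫⁻ y, f y ^ 2 ∂μ := by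
  have hprod : AEMeasurable (fun p : G × G => f p.2 ^ 2 * g (p.1 - p.2)) (μ.prod μ) :=
    ((hf.comp_quasiMeasurePreserving Measure.quasiMeasurePreserving_snd).pow_const 2).mul
      (hg.comp_quasiMeasurePreserving (quasiMeasurePreserving_sub_of_right_invariant μ μ))
  calc ∫⁻ x, (∫⁻ y, f y * g (x - y) ∂μ) ^ 2 ∂μ
      ≤ ∫⁻ x, (∫⁻ y, f y ^ 2 * g (x - y) ∂μ) * ∫⁻ z, g z ∂μ ∂μ := by
        refine lintegral_mono fun x => ?_
        rw [← lintegral_sub_left_eq_self g x]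
        exact ENNReal.lintegral_mul_sq_le hf <| hg.comp_quasiMeasurePreserving
          (Measure.measurePreserving_sub_left μ x).quasiMeasurePreserving
    _ = (∫⁻ y, ∫⁻ x, f y ^ 2 * g (x - y) ∂μ ∂μ) * ∫⁻ z, g z ∂μ := by
        rw [lintegral_mul_const'' _ hprod.lintegral_prod_right', lintegral_lintegral_swap hprod]
    _ = (∫⁻ z, g z ∂μ) ^ 2 * ∫⁻ y, f y ^ 2 ∂μ := by
        have hshift : ∀ y, ∫⁻ x, f y ^ 2 * g (x - y) ∂μ = f y ^ 2 * ∫⁻ z, g z ∂μ := fun y => by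
          have hgy : AEMeasurable (fun x => g (x - y)) μ := hg.comp_quasiMeasurePreserving
            (measurePreserving_sub_right μ y).quasiMeasurePreserving
          rw [lintegral_const_mul'' _ hgy, lintegral_sub_right_eq_self]
        simp_rw [hshift]
        rw [lintegral_mul_const'' _ (hf.pow_const 2)]
        ring

theorem MemLp.convolution_of_integrable {f g : G → ℝ} (hf : MemLp f 2 μ) (hg : Integrable g μ) :
    MemLp (fun x => ∫ y, f y * g (x - y) ∂μ) 2 μ := by
  have hmeas : AEStronglyMeasurable (fun p : G × G => f p.2 * g (p.1 - p.2)) (μ.prod μ) :=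
    hf.1.convolution_integrand (ContinuousLinearMap.mul ℝ ℝ) hg.1
  refine ⟨hmeas.integral_prod_right', ?_⟩
  rw [eLpNorm_lt_top_iff_lintegral_rpow_enorm_lt_top two_ne_zero ENNReal.ofNat_ne_top]
  have hf2 : ∫⁻ y, ‖f y‖ₑ ^ 2 ∂μ < ∞ := by
    simpa using lintegral_rpow_enorm_lt_top_of_eLpNorm_lt_top two_ne_zero ENNReal.ofNat_ne_top hf.2
  calc ∫⁻ x, ‖∫ y, f y * g (x - y) ∂μ‖ₑ ^ (2 : ℝ≥0∞).toReal ∂μ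
      ≤ ∫⁻ x, (∫⁻ y, ‖f y‖ₑ * ‖g (x - y)‖ₑ ∂μ) ^ 2 ∂μ := by
        refine lintegral_mono fun x => ?_
        simpa [← enorm_mul] using pow_le_pow_left' (enorm_integral_le_lintegral_enorm _) 2
    _ ≤ (∫⁻ z, ‖g z‖ₑ ∂μ) ^ 2 * ∫⁻ y, ‖f y‖ₑ ^ 2 ∂μ :=
        lintegral_convolution_sq_le hf.1.enorm hg.1.enorm
    _ < ∞ := ENNReal.mul_lt_top (ENNReal.pow_lt_top hg.2) hf2

end Convolution

end MeasureTheory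

theorem integral_integral_mul_sub_of_antisymm {α : Type*} [MeasurableSpace α] {μ : Measure α}
    [SFinite μ] {F : α → α → ℝ} (hF : ∀ x y, F y x = -F x y) (φ : α → ℝ)
    (h : Integrable (fun p : α × α => F p.1 p.2 * φ p.1) (μ.prod μ)) :
    ∫ x, ∫ y, F x y * (φ y - φ x) ∂μ ∂μ = -2 * ∫ x, (∫ y, F x y ∂μ) * φ x ∂μ := by
  have hswap : (fun p : α × α => F p.1 p.2 * φ p.2)
      = fun p => -((fun q : α × α => F q.1 q.2 * φ q.1) p.swap) := by
    funext p
    simp [hF p.1 p.2]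
  have h' : Integrable (fun p : α × α => F p.1 p.2 * φ p.2) (μ.prod μ) := by
    rw [hswap]
    exact h.swap.neg
  have hsnd : ∫ p, F p.1 p.2 * φ p.2 ∂μ.prod μ = -∫ p, F p.1 p.2 * φ p.1 ∂μ.prod μ := by
    rw [hswap, integral_neg]
    exact congrArg Neg.neg (integral_prod_swap (μ := μ) (ν := μ)
      (fun q : α × α => F q.1 q.2 * φ q.1))
  have hfst : ∫ x, (∫ y, F x y ∂μ) * φ x ∂μ = ∫ p, F p.1 p.2 * φ p.1 ∂μ.prod μ := by
    simp_rw [← integral_mul_const]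
    exact integral_integral h
  simp_rw [mul_sub]
  rw [integral_integral (h'.sub h), integral_sub h' h, hsnd, hfst]
  ring

theorem MemVD.integrable {L : ℝ} {v : ℝ → ℝ} (hv : MemVD L v) : Integrable v :=
  IntegrableOn.integrable_of_ae_notMem_eq_zero ((hv.1.restrict _).integrable one_le_two) hv.2

theorem knl_ae_eq_convolution_sub {γ u : ℝ → ℝ} (hγ : Integrable γ) (hu : Integrable u) :
    Knl γ u =ᵐ[volume] fun x => (∫ y, u y * γ (x - y)) - u x * ∫ z, γ z := by
  filter_upwards [(hu.convolution_integrand (ContinuousLinearMap.mul ℝ ℝ) hγ).prod_right_ae]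
    with x hx
  simp_rw [Knl, sub_mul]
  rw [integral_sub (by exact hx) ((hγ.comp_sub_left x).const_mul (u x)), integral_const_mul,
    integral_sub_left_eq_self γ volume x]

theorem memLp_knl {γ u : ℝ → ℝ} (hγ : Integrable γ) (hu₂ : MemLp u 2) (hu₁ : Integrable u) :
    MemLp (Knl γ u) 2 :=
  ((hu₂.convolution_of_integrable hγ).sub (hu₂.mul_const _)).ae_eq
    (knl_ae_eq_convolution_sub hγ hu₁).symm

theorem BD_represents_K_general (L : ℝ) (γ : ℝ → ℝ)
    (hγeven : ∀ z, γ (-z) = γ z)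
    (hγL1 : Integrable γ)
    (u φ : ℝ → ℝ) (hu : MemVD L u) (hφ : MemVD L φ) :
    MemLp (Knl γ u) 2 ∧
      BD γ u φ = - ∫ x in Icc (-L) L, Knl γ u x * φ x := by
  refine ⟨memLp_knl hγL1 hu.1 hu.integrable, ?_⟩
  have hanti : ∀ x y, (u x - u y) * γ (y - x) = -((u y - u x) * γ (x - y)) := fun x y => by
    rw [← hγeven, neg_sub]
    ring
  have hint : Integrable (fun p : ℝ × ℝ => (u p.2 - u p.1) * γ (p.1 - p.2) * φ p.1)
      (volume.prod volume) := by
    have h := (hu.1.integrable_mul_mul_sub hφ.1 hγL1).sub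
      ((hu.1.integrable_mul hφ.1).convolution_integrand_fst hγL1)
    convert h using 2
    simp only [Pi.sub_apply, Pi.mul_apply]
    ring
  have hΩ : ∫ x in Icc (-L) L, Knl γ u x * φ x = ∫ x, Knl γ u x * φ x :=
    setIntegral_eq_integral_of_ae_compl_eq_zero <| by
      filter_upwards [hφ.2] with x hx hxΩ
      rw [hx hxΩ, mul_zero]
  rw [BD, integral_integral_mul_sub_of_antisymm hanti φ hint, hΩ]
  unfold Knl
  ring

/-- For `u, φ ∈ V_D`, `Ku ∈ L²(ℝ)` and `B_D[u, φ] = −∫_Ω Ku(x) φ(x) dx`. -/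
theorem BD_represents_K (L : ℝ) (hL : 0 < L) (γ : ℝ → ℝ)
    (hγeven : ∀ z, γ (-z) = γ z) (hγpos : ∀ z, 0 < γ z)
    (hγL1 : Integrable γ) (hγL2 : MemLp γ 2)
    (hγmom : Integrable (fun z => z ^ 2 * γ z))
    (u φ : ℝ → ℝ) (hu : MemVD L u) (hφ : MemVD L φ) :
    MemLp (Knl γ u) 2 ∧
      BD γ u φ = - ∫ x in Icc (-L) L, Knl γ u x * φ x :=
  BD_represents_K_general L γ hγeven hγL1 u φ hu hφ
end

section
/- There exists a constant β > 0 such that B_D[u, u] ≥ β ‖u‖²_{L²(Ω)} for all u ∈ V_D; that is, the bilinear form B_D is coercive on V_D. -/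
/-!
For `x ∈ Ω` the function `u` vanishes on `(L, ∞)`, so the inner integral of `B_D[u, u]` at `x`
is at least `u(x)² ∫_{y > L} γ(x - y) dy = u(x)² ∫_{z < x - L} γ ≥ u(x)² ∫_{z < -2L} γ`.
The last integral is a positive constant independent of `x` because `γ > 0`; integrating over `Ω`
gives coercivity. Integrability of the double integrand comes from `(a - b)² ≤ 2a² + 2b²` and
the convolution estimate for `u² ∈ L¹` against `γ ∈ L¹`.
-/

open MeasureTheory Set Real

/-- The `L²` norm of `u` on a set `s`, `‖u‖_{L²(s)} = (∫_s u²)^{1/2}`. -/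
noncomputable def l2normOn (s : Set ℝ) (u : ℝ → ℝ) : ℝ := Real.sqrt (∫ x in s, u x ^ 2)

section Kernel

variable {G : Type*} [AddCommGroup G] [MeasurableSpace G] {μ : Measure G} {u γ : G → ℝ}

theorem integrable_sq_sub_mul_comp_sub [MeasurableAdd₂ G] [MeasurableNeg G] [SFinite μ]
    [μ.IsAddLeftInvariant] [μ.IsNegInvariant] (hu : MemLp u 2 μ) (hγ : Integrable γ μ) :
    Integrable (fun p : G × G => (u p.2 - u p.1) ^ 2 * γ (p.1 - p.2)) (μ.prod μ) := by
  have hsnd : Integrable (fun p : G × G => u p.2 ^ 2 * γ (p.1 - p.2)) (μ.prod μ) :=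
    hu.integrable_sq.convolution_integrand (ContinuousLinearMap.mul ℝ ℝ) hγ
  have hfst : Integrable (fun p : G × G => u p.1 ^ 2 * γ (p.1 - p.2)) (μ.prod μ) := by
    convert (hu.integrable_sq.convolution_integrand (ContinuousLinearMap.mul ℝ ℝ)
      hγ.comp_neg).swap using 2 with p
    simp [neg_sub]
  have hmeas : AEStronglyMeasurable (fun p : G × G => (u p.2 - u p.1) ^ 2 * γ (p.1 - p.2))
      (μ.prod μ) :=
    ((hu.aestronglyMeasurable.comp_snd.sub hu.aestronglyMeasurable.comp_fst).pow 2).mul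
      (hγ.aestronglyMeasurable.comp_quasiMeasurePreserving
        (quasiMeasurePreserving_sub_of_right_invariant μ μ))
  refine (((hfst.norm.add hsnd.norm).const_mul 2).mono' hmeas) (ae_of_all _ fun p => ?_)
  simp only [Pi.add_apply, norm_mul, norm_pow, Real.norm_eq_abs, sq_abs]
  nlinarith [mul_nonneg (sq_nonneg (u p.1 + u p.2)) (abs_nonneg (γ (p.1 - p.2)))]

theorem sq_mul_setIntegral_le_integral {t : Set G} {x : G} (hγ : 0 ≤ γ) (ht : MeasurableSet t)
    (hut : ∀ᵐ y ∂μ, y ∈ t → u y = 0)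
    (hint : Integrable (fun y => (u y - u x) ^ 2 * γ (x - y)) μ) :
    u x ^ 2 * ∫ y in t, γ (x - y) ∂μ ≤ ∫ y, (u y - u x) ^ 2 * γ (x - y) ∂μ := by
  have hvanish : ∫ y in t, (u y - u x) ^ 2 * γ (x - y) ∂μ = u x ^ 2 * ∫ y in t, γ (x - y) ∂μ := by
    rw [← integral_const_mul]
    refine setIntegral_congr_ae ht (hut.mono fun y hy hyt => ?_)
    rw [hy hyt]
    ring
  rw [← hvanish]
  exact setIntegral_le_integral hint (ae_of_all _ fun y => mul_nonneg (sq_nonneg _) (hγ _))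

theorem mul_setIntegral_sq_le_integral_integral [MeasurableAdd₂ G] [MeasurableNeg G] [SFinite μ]
    [μ.IsAddLeftInvariant] [μ.IsNegInvariant] {s t : Set G} {c : ℝ} (hu : MemLp u 2 μ)
    (hγ : Integrable γ μ) (hγ0 : 0 ≤ γ) (hs : MeasurableSet s) (ht : MeasurableSet t)
    (hut : ∀ᵐ y ∂μ, y ∈ t → u y = 0) (hc : ∀ x ∈ s, c ≤ ∫ y in t, γ (x - y) ∂μ) :
    c * ∫ x in s, u x ^ 2 ∂μ ≤ ∫ x, ∫ y, (u y - u x) ^ 2 * γ (x - y) ∂μ ∂μ := by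
  have hF := integrable_sq_sub_mul_comp_sub hu hγ
  have hpointwise : ∀ᵐ x ∂μ, s.indicator (fun x => c * u x ^ 2) x ≤
      ∫ y, (u y - u x) ^ 2 * γ (x - y) ∂μ := by
    filter_upwards [hF.prod_right_ae] with x hx
    by_cases hxs : x ∈ s
    · rw [indicator_of_mem hxs, mul_comm]
      exact (mul_le_mul_of_nonneg_left (hc x hxs) (sq_nonneg _)).trans
        (sq_mul_setIntegral_le_integral hγ0 ht hut hx)
    · rw [indicator_of_notMem hxs]
      exact integral_nonneg fun y => mul_nonneg (sq_nonneg _) (hγ0 _)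
  calc c * ∫ x in s, u x ^ 2 ∂μ = ∫ x, s.indicator (fun x => c * u x ^ 2) x ∂μ := by
        rw [integral_indicator hs, integral_const_mul]
    _ ≤ _ := integral_mono_ae ((hu.integrable_sq.const_mul c).indicator hs)
        hF.integral_prod_left hpointwise

end Kernel

theorem setIntegral_Iio_le_setIntegral_Ioi_comp_sub {γ : ℝ → ℝ} (hγ : Integrable γ) (hγ0 : 0 ≤ γ)
    {a b x : ℝ} (h : a ≤ x - b) : ∫ z in Iio a, γ z ≤ ∫ y in Ioi b, γ (x - y) := by
  have hpre : (fun y => x - y) ⁻¹' Iio (x - b) = Ioi b := by ext y; simp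
  rw [← hpre, (Measure.measurePreserving_sub_left volume x).setIntegral_preimage_emb
    (measurableEmbedding_subLeft x)]
  exact setIntegral_mono_set hγ.integrableOn (ae_of_all _ hγ0)
    (Iio_subset_Iio h).eventuallyLE

theorem BD_self (γ u : ℝ → ℝ) :
    BD γ u u = (1 / 2) * ∫ x, ∫ y, (u y - u x) ^ 2 * γ (x - y) := by
  simp only [BD, sq]
  congr 1
  refine integral_congr_ae (ae_of_all _ fun x => integral_congr_ae (ae_of_all _ fun y => ?_))
  ring

theorem BD_coercive_general (L : ℝ) (γ : ℝ → ℝ)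
    (hγpos : ∀ z, 0 < γ z)
    (hγL1 : Integrable γ) :
    ∃ β : ℝ, 0 < β ∧
      ∀ u : ℝ → ℝ, MemVD L u →
        β * (∫ x in Icc (-L) L, u x ^ 2) ≤ BD γ u u := by
  set c := ∫ z in Iio (-2 * L), γ z
  have hc : 0 < c := by
    rw [setIntegral_pos_iff_support_of_nonneg_ae (ae_of_all _ fun z => (hγpos z).le)
      hγL1.integrableOn, (inter_eq_right (s := Function.support γ)).2 fun z _ => (hγpos z).ne']
    simp
  refine ⟨c / 2, half_pos hc, fun u ⟨hu, hu0⟩ => ?_⟩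
  have hvanish : ∀ᵐ y, y ∈ Ioi L → u y = 0 :=
    hu0.mono fun y hy hyL => hy fun hy' => (not_lt.2 hy'.2) hyL
  have hlower := mul_setIntegral_sq_le_integral_integral hu hγL1 (fun z => (hγpos z).le)
    measurableSet_Icc measurableSet_Ioi hvanish fun x (hx : x ∈ Icc (-L) L) =>
      setIntegral_Iio_le_setIntegral_Ioi_comp_sub (a := -2 * L) hγL1 (fun z => (hγpos z).le)
        (by linarith [hx.1])
  rw [BD_self]
  linarith

/-- Coercivity of `B_D`: there is `β > 0` with `B_D[u, u] ≥ β ‖u‖²_{L²(Ω)}`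
for all `u ∈ V_D`. -/
theorem BD_coercive (L : ℝ) (hL : 0 < L) (γ : ℝ → ℝ)
    (hγeven : ∀ z, γ (-z) = γ z) (hγpos : ∀ z, 0 < γ z)
    (hγL1 : Integrable γ) (hγL2 : MemLp γ 2)
    (hγmom : Integrable (fun z => z ^ 2 * γ z)) :
    ∃ β : ℝ, 0 < β ∧
      ∀ u : ℝ → ℝ, MemVD L u →
        β * (∫ x in Icc (-L) L, u x ^ 2) ≤ BD γ u u :=
  BD_coercive_general L γ hγpos hγL1
end

section
/- There exists a constant c > 0 such that ‖Ku‖_{L²(Ω)} ≤ c (B_D[u, u])^{1/2} for all u ∈ V_D; in particular, if a sequence (u_n) in V_D satisfies B_D[u_n, u_n] → 0, then Ku_n → 0 in L²(Ω). -/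
/-!
Weighted Cauchy–Schwarz with the weight `y ↦ γ(x − y)` gives, for a.e. `x`,
`(Ku(x))² ≤ ‖γ‖₁ ∫ (u(y) − u(x))² γ(x − y) dy`; integrating in `x` yields
`‖Ku‖²_{L²(s)} ≤ 2 ‖γ‖₁ B_D[u, u]` on every set `s`, so `c = √(2 ‖γ‖₁)` works.
-/

open MeasureTheory Set Real

section WeightedCauchySchwarz

variable {α : Type*} [MeasurableSpace α] {μ : Measure α} {f w : α → ℝ}

lemma integrable_mul_of_integrable_sq_mul (hw : 0 ≤ᵐ[μ] w) (hwi : Integrable w μ)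
    (hf : AEStronglyMeasurable f μ) (hfw : Integrable (fun a => f a ^ 2 * w a) μ) :
    Integrable (fun a => f a * w a) μ := by
  refine (hfw.add hwi).mono' (hf.mul hwi.aestronglyMeasurable) ?_
  filter_upwards [hw] with a (ha : 0 ≤ w a)
  rw [norm_mul, Real.norm_of_nonneg ha, Real.norm_eq_abs, Pi.add_apply]
  nlinarith [abs_nonneg (f a), sq_abs (f a), sq_nonneg (|f a| - 1)]

lemma sq_integral_mul_le (hw : 0 ≤ᵐ[μ] w) (hwi : Integrable w μ)
    (hf : AEStronglyMeasurable f μ) (hfw : Integrable (fun a => f a ^ 2 * w a) μ) :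
    (∫ a, f a * w a ∂μ) ^ 2 ≤ (∫ a, w a ∂μ) * ∫ a, f a ^ 2 * w a ∂μ := by
  have hfw' := integrable_mul_of_integrable_sq_mul hw hwi hf hfw
  -- `∫ (f - t)² w ≥ 0` for all `t`, so this quadratic in `t` has nonpositive discriminant
  have hquad : ∀ t : ℝ, 0 ≤ (∫ a, w a ∂μ) * (t * t) + (-2 * ∫ a, f a * w a ∂μ) * t
      + ∫ a, f a ^ 2 * w a ∂μ := by
    intro t
    have hexpand : ∫ a, (f a - t) ^ 2 * w a ∂μ
        = ∫ a, (t * t) * w a + (-2 * t) * (f a * w a) + f a ^ 2 * w a ∂μ :=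
      integral_congr_ae (.of_forall fun a => by ring)
    have hnonneg : 0 ≤ ∫ a, (f a - t) ^ 2 * w a ∂μ :=
      integral_nonneg_of_ae (by filter_upwards [hw] with a (ha : 0 ≤ w a); positivity)
    rw [hexpand, integral_add ?_ hfw, integral_add (hwi.const_mul _) (hfw'.const_mul _),
      integral_const_mul, integral_const_mul] at hnonneg
    · linarith
    · exact (hwi.const_mul _).add (hfw'.const_mul _)
  have := discrim_le_zero hquad
  rw [discrim] at this
  linarith

end WeightedCauchySchwarz

section Kernel

variable {γ u : ℝ → ℝ}

lemma integrable_sq_sub_mul_kernel (hγ : ∀ z, 0 ≤ γ z) (hγi : Integrable γ) (hu : MemLp u 2) :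
    Integrable (fun p : ℝ × ℝ => (u p.2 - u p.1) ^ 2 * γ (p.1 - p.2)) (volume.prod volume) := by
  have hu2 := hu.integrable_sq
  have hsnd : Integrable (fun p : ℝ × ℝ => u p.2 ^ 2 * γ (p.1 - p.2)) (volume.prod volume) :=
    hu2.convolution_integrand (ContinuousLinearMap.mul ℝ ℝ) hγi
  have hfst : Integrable (fun p : ℝ × ℝ => u p.1 ^ 2 * γ (p.1 - p.2)) (volume.prod volume) := by
    have := (hu2.convolution_integrand (ContinuousLinearMap.mul ℝ ℝ) hγi.comp_neg).swap
    refine this.congr (.of_forall fun p => ?_)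
    simp [neg_sub]
  have hmeas : AEStronglyMeasurable (fun p : ℝ × ℝ => (u p.2 - u p.1) ^ 2 * γ (p.1 - p.2))
      (volume.prod volume) :=
    ((hu.1.comp_snd.sub hu.1.comp_fst).pow 2).mul
      (hγi.1.comp_quasiMeasurePreserving (quasiMeasurePreserving_sub _ _))
  refine ((hsnd.add hfst).const_mul 2).mono' hmeas (.of_forall fun p => ?_)
  rw [Real.norm_of_nonneg (mul_nonneg (sq_nonneg _) (hγ _)), Pi.add_apply]
  nlinarith [mul_nonneg (hγ (p.1 - p.2)) (sq_nonneg (u p.2 + u p.1))]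

lemma ae_sq_Knl_le (hγ : ∀ z, 0 ≤ γ z) (hγi : Integrable γ) (hu : MemLp u 2) :
    ∀ᵐ x, Knl γ u x ^ 2 ≤ (∫ z, γ z) * ∫ y, (u y - u x) ^ 2 * γ (x - y) := by
  filter_upwards [(integrable_sq_sub_mul_kernel hγ hγi hu).prod_right_ae] with x hx
  have := sq_integral_mul_le (f := fun y => u y - u x) (.of_forall fun y => hγ (x - y))
    (hγi.comp_sub_left x) (hu.1.sub aestronglyMeasurable_const) hx
  rwa [integral_sub_left_eq_self] at this

lemma BD_self_eq : BD γ u u = 1 / 2 * ∫ x, ∫ y, (u y - u x) ^ 2 * γ (x - y) := by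
  rw [BD]
  congr! 5 with x y
  ring

lemma setIntegral_sq_Knl_le (hγ : ∀ z, 0 ≤ γ z) (hγi : Integrable γ) (hu : MemLp u 2)
    (s : Set ℝ) : ∫ x in s, Knl γ u x ^ 2 ≤ 2 * (∫ z, γ z) * BD γ u u := by
  have henergy := (integrable_sq_sub_mul_kernel hγ hγi hu).integral_prod_left.const_mul
    (∫ z, γ z)
  calc ∫ x in s, Knl γ u x ^ 2
      ≤ ∫ x in s, (∫ z, γ z) * ∫ y, (u y - u x) ^ 2 * γ (x - y) :=
        integral_mono_of_nonneg (.of_forall fun x => sq_nonneg _) henergy.restrict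
          (ae_restrict_of_ae (ae_sq_Knl_le hγ hγi hu))
    _ ≤ ∫ x, (∫ z, γ z) * ∫ y, (u y - u x) ^ 2 * γ (x - y) :=
        setIntegral_le_integral henergy (.of_forall fun x => mul_nonneg (integral_nonneg hγ)
          (integral_nonneg fun y => mul_nonneg (sq_nonneg _) (hγ _)))
    _ = 2 * (∫ z, γ z) * BD γ u u := by
        rw [integral_const_mul, BD_self_eq]
        ring

lemma l2normOn_Knl_le (hγ : ∀ z, 0 ≤ γ z) (hγi : Integrable γ) (hu : MemLp u 2)
    (s : Set ℝ) : l2normOn s (Knl γ u) ≤ √(2 * ∫ z, γ z) * √(BD γ u u) := by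
  rw [l2normOn, ← Real.sqrt_mul (mul_nonneg zero_le_two (integral_nonneg hγ))]
  exact Real.sqrt_le_sqrt (setIntegral_sq_Knl_le hγ hγi hu s)

end Kernel

open Filter in
theorem K_controlled_by_BD_general (L : ℝ) (γ : ℝ → ℝ)
    (hγpos : ∀ z, 0 < γ z) (hγL1 : Integrable γ) :
    ∃ c : ℝ, 0 < c ∧
      (∀ u : ℝ → ℝ, MemVD L u →
        l2normOn (Icc (-L) L) (Knl γ u) ≤ c * Real.sqrt (BD γ u u)) ∧
      (∀ useq : ℕ → ℝ → ℝ, (∀ n, MemVD L (useq n)) →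
        Tendsto (fun n => BD γ (useq n) (useq n)) atTop (nhds 0) →
        Tendsto (fun n => l2normOn (Icc (-L) L) (Knl γ (useq n))) atTop (nhds 0)) := by
  have hγ : ∀ z, 0 ≤ γ z := fun z => (hγpos z).le
  have hmass : 0 < ∫ z, γ z := by
    rw [integral_pos_iff_support_of_nonneg hγ hγL1,
      Function.support_eq_univ fun z => (hγpos z).ne']
    simp
  refine ⟨√(2 * ∫ z, γ z), by positivity, fun u hu => l2normOn_Knl_le hγ hγL1 hu.1 _, ?_⟩
  intro useq hseq hBD
  refine squeeze_zero (fun n => Real.sqrt_nonneg _)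
    (fun n => l2normOn_Knl_le hγ hγL1 (hseq n).1 _) ?_
  simpa using hBD.sqrt.const_mul √(2 * ∫ z, γ z)

open Filter in
/-- There is `c > 0` with `‖Ku‖_{L²(Ω)} ≤ c (B_D[u, u])^{1/2}` for all `u ∈ V_D`;
in particular, if `B_D[u_n, u_n] → 0` for a sequence in `V_D`, then `Ku_n → 0` in `L²(Ω)`. -/
theorem K_controlled_by_BD (L : ℝ) (hL : 0 < L) (γ : ℝ → ℝ)
    (hγeven : ∀ z, γ (-z) = γ z) (hγpos : ∀ z, 0 < γ z)
    (hγL1 : Integrable γ) (hγL2 : MemLp γ 2)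
    (hγmom : Integrable (fun z => z ^ 2 * γ z)) :
    ∃ c : ℝ, 0 < c ∧
      (∀ u : ℝ → ℝ, MemVD L u →
        l2normOn (Icc (-L) L) (Knl γ u) ≤ c * Real.sqrt (BD γ u u)) ∧
      (∀ useq : ℕ → ℝ → ℝ, (∀ n, MemVD L (useq n)) →
        Tendsto (fun n => BD γ (useq n) (useq n)) atTop (nhds 0) →
        Tendsto (fun n => l2normOn (Icc (-L) L) (Knl γ (useq n))) atTop (nhds 0)) :=
  K_controlled_by_BD_general L γ hγpos hγL1
end

section
/- A priori L² bound for Galerkin-type solutions of the truncated nonlocal Gray–Scott system: let T > 0, let u, v : [0, T] → L²(Ω) be continuously differentiable curves, and let X ⊆ L²(Ω) be a linear subspace with u(t), v(t) ∈ X for all t. Assume that for every t ∈ [0, T] and every φ ∈ X: (u′(t), φ) + d_u B[u(t), φ] = (−σ(u(t))σ(v(t))² + f(1 − u(t)), φ) and (v′(t), φ) + d_v B[v(t), φ] = (σ(u(t))σ(v(t))² − (f + κ) v(t), φ), where σ(u(t)), σ(v(t)) denote pointwise compositions. Let ε > 0 be small enough that A := (1 − ε²)(f + κ) − ε² |d_v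 − d_u| > 0, and set B₀ := (1/ε²)(|d_v − d_u| + κ)(2L) + (f/ε²)(2L) and C₀ := (1/ε²)(|d_v − d_u| + κ). Then for all t ∈ [0, T]: ‖u(t)‖ + ‖v(t)‖ ≤ (3 + √(C₀/A)) (‖u(0)‖ + ‖v(0)‖) + √(B₀/A) + 2√(2L). -/
/-!
Testing the `u`-equation with `u` makes the reaction term nonpositive (since `σ(z) z ≥ 0`), so
`d/dt ‖u‖² ≤ -f ‖u‖² + 2Lf`. Testing both equations with `w = u + v` and adding them cancels the
reaction terms; writing `B[v, w] = B[w, w] - B[u, w]` and absorbing the cross terms by Young's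
inequality with weight `ε²` gives `d/dt ‖w‖² ≤ -2A ‖w‖² + (B₀ + C₀ ‖u(0)‖²) / 2`, using the bound
on `‖u‖`. Grönwall bounds `‖u‖²` and `‖w‖²`, and `‖v‖ ≤ ‖w‖ + ‖u‖`.
-/

open MeasureTheory Set Real

/-- Lebesgue measure restricted to `Ω = [−L, L]`. -/
noncomputable def muOmega (L : ℝ) : Measure ℝ := volume.restrict (Icc (-L) L)

open scoped InnerProductSpace

theorem le_add_div_of_hasDerivWithinAt_le_neg_mul_add {y y' : ℝ → ℝ} {a b T : ℝ}
    (ha : 0 < a) (hb : 0 ≤ b) (hy₀ : 0 ≤ y 0)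
    (hy : ∀ t ∈ Icc 0 T, HasDerivWithinAt y (y' t) (Icc 0 T) t)
    (hy' : ∀ t ∈ Icc 0 T, y' t ≤ -a * y t + b) :
    ∀ t ∈ Icc 0 T, y t ≤ y 0 + b / a := by
  intro t ht
  have hg := le_gronwallBound_of_liminf_deriv_right_le (δ := y 0) (K := -a) (ε := b)
    (fun s hs => (hy s hs).continuousWithinAt)
    (fun s hs _ hr => ((hy s (Ico_subset_Icc_self hs)).mono_of_mem_nhdsWithin
      (Icc_mem_nhdsGE_of_mem hs)).liminf_right_slope_le hr)
    le_rfl (fun s hs => hy' s (Ico_subset_Icc_self hs)) t ht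
  rw [gronwallBound_of_K_ne_0 (neg_ne_zero.2 ha.ne'), sub_zero, div_neg] at hg
  have he₀ : 0 < exp (-a * t) := exp_pos _
  have he₁ : exp (-a * t) ≤ 1 := exp_le_one_iff.2 (by nlinarith [ht.1])
  have hba : 0 ≤ b / a := div_nonneg hb ha.le
  nlinarith

namespace MeasureTheory.L2

variable {α : Type*} [MeasurableSpace α] {μ : Measure α}

theorem integral_mul_eq_inner (f g : Lp ℝ 2 μ) : ∫ x, f x * g x ∂μ = ⟪f, g⟫_ℝ := by
  simp [inner_def, mul_comm]

theorem integrable_mul (f g : Lp ℝ 2 μ) : Integrable (fun x => f x * g x) μ := by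
  simpa [mul_comm] using integrable_inner (𝕜 := ℝ) f g

theorem integral_le_sqrt_measureReal_mul_norm [IsFiniteMeasure μ] (f : Lp ℝ 2 μ) :
    ∫ x, f x ∂μ ≤ √(μ.real univ) * ‖f‖ := by
  have h1 : ∫ x, f x ∂μ = ⟪f, Lp.const 2 μ (1 : ℝ)⟫_ℝ := by
    rw [inner_def]
    refine integral_congr_ae ?_
    filter_upwards [Lp.coeFn_const 2 μ (1 : ℝ)] with x hx
    rw [RCLike.inner_apply, hx]
    simp
  have h2 : ‖Lp.const 2 μ (1 : ℝ)‖ = √(μ.real univ) := by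
    rw [Lp.norm_const' 2 μ (1 : ℝ) (by norm_num) (by norm_num), sqrt_eq_rpow]
    norm_num
  rw [h1, mul_comm, ← h2]
  exact real_inner_le_norm _ _

end MeasureTheory.L2

instance (L : ℝ) : IsFiniteMeasure (muOmega L) := by
  unfold muOmega; infer_instance

theorem muOmega_real_univ {L : ℝ} (hL : 0 ≤ L) : (muOmega L).real univ = 2 * L := by
  rw [muOmega, measureReal_restrict_apply_univ, Real.volume_real_Icc_of_le (by linarith)]
  ring

namespace GrayScott

section WeakForm

variable {α : Type*} [MeasurableSpace α] {μ : Measure α} [IsFiniteMeasure μ] {σ : ℝ → ℝ} {C : ℝ}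

theorem integrable_reaction_mul (hσ : Continuous σ) (hσb : ∀ z, |σ z| ≤ C)
    (a b φ : Lp ℝ 2 μ) : Integrable (fun x => σ (a x) * σ (b x) ^ 2 * φ x) μ := by
  have hC : 0 ≤ C := (abs_nonneg _).trans (hσb 0)
  refine ((Lp.memLp φ).integrable (by norm_num)).bdd_mul (c := C * C ^ 2)
    ((hσ.comp_aestronglyMeasurable (Lp.aestronglyMeasurable a)).mul
      ((hσ.comp_aestronglyMeasurable (Lp.aestronglyMeasurable b)).pow 2))
    (ae_of_all _ fun x => ?_)
  rw [norm_mul, norm_pow, Real.norm_eq_abs, Real.norm_eq_abs]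
  gcongr
  exacts [hσb _, hσb _]

theorem integral_reaction_u_mul (hσ : Continuous σ) (hσb : ∀ z, |σ z| ≤ C) (f : ℝ)
    (a b φ : Lp ℝ 2 μ) :
    ∫ x, (-(σ (a x)) * σ (b x) ^ 2 + f * (1 - a x)) * φ x ∂μ =
      -∫ x, σ (a x) * σ (b x) ^ 2 * φ x ∂μ + f * ∫ x, φ x ∂μ - f * ⟪a, φ⟫_ℝ := by
  have hN : Integrable (fun x => -(σ (a x) * σ (b x) ^ 2 * φ x)) μ :=
    (integrable_reaction_mul hσ hσb a b φ).neg
  have hφ : Integrable (fun x => f * φ x) μ :=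
    ((Lp.memLp φ).integrable (by norm_num)).const_mul f
  have haφ : Integrable (fun x => f * (a x * φ x)) μ := (L2.integrable_mul a φ).const_mul f
  have hNφ : Integrable (fun x => -(σ (a x) * σ (b x) ^ 2 * φ x) + f * φ x) μ := hN.add hφ
  rw [← L2.integral_mul_eq_inner, ← integral_const_mul, ← integral_const_mul, ← integral_neg,
    ← integral_add hN hφ, ← integral_sub hNφ haφ]
  congr 1 with x
  ring

theorem integral_reaction_v_mul (hσ : Continuous σ) (hσb : ∀ z, |σ z| ≤ C) (g : ℝ)
    (a b φ : Lp ℝ 2 μ) :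
    ∫ x, (σ (a x) * σ (b x) ^ 2 - g * b x) * φ x ∂μ =
      ∫ x, σ (a x) * σ (b x) ^ 2 * φ x ∂μ - g * ⟪b, φ⟫_ℝ := by
  rw [← L2.integral_mul_eq_inner, ← integral_const_mul,
    ← integral_sub (integrable_reaction_mul hσ hσb a b φ) ((L2.integrable_mul b φ).const_mul g)]
  congr 1 with x
  ring

variable (B : Lp ℝ 2 μ →ₗ[ℝ] Lp ℝ 2 μ →ₗ[ℝ] ℝ) {a a' b b' : Lp ℝ 2 μ}

theorem two_inner_deriv_le_of_weak_eq_u (hσ : Continuous σ) (hσb : ∀ z, |σ z| ≤ C)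
    (hσsign : ∀ z, 0 ≤ σ z * z) {du f : ℝ} (hdu : 0 ≤ du) (hf : 0 ≤ f) (hBa : 0 ≤ B a a)
    (h : ∫ x, a' x * a x ∂μ + du * B a a =
      ∫ x, (-(σ (a x)) * σ (b x) ^ 2 + f * (1 - a x)) * a x ∂μ) :
    2 * ⟪a, a'⟫_ℝ ≤ -f * ‖a‖ ^ 2 + f * μ.real univ := by
  rw [L2.integral_mul_eq_inner, integral_reaction_u_mul hσ hσb, real_inner_comm,
    real_inner_self_eq_norm_sq] at h
  have hN : 0 ≤ ∫ x, σ (a x) * σ (b x) ^ 2 * a x ∂μ := integral_nonneg fun x => by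
    show 0 ≤ _
    nlinarith [mul_nonneg (sq_nonneg (σ (b x))) (hσsign (a x))]
  have hI := mul_le_mul_of_nonneg_left (L2.integral_le_sqrt_measureReal_mul_norm a) hf
  have hm := sq_sqrt (measureReal_nonneg : 0 ≤ μ.real univ)
  nlinarith [mul_nonneg hdu hBa, mul_nonneg hf (sq_nonneg (√(μ.real univ) - ‖a‖))]

theorem inner_deriv_add_le_of_weak_eq (hσ : Continuous σ) (hσb : ∀ z, |σ z| ≤ C)
    {du dv f κ : ℝ} (hdv : 0 ≤ dv) (hf : 0 ≤ f) (hκ : 0 ≤ κ)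
    (hBpos : 0 ≤ B (a + b) (a + b)) (hBbdd : |B a (a + b)| ≤ ‖a‖ * ‖a + b‖)
    (hu : ∫ x, a' x * (a + b) x ∂μ + du * B a (a + b) =
      ∫ x, (-(σ (a x)) * σ (b x) ^ 2 + f * (1 - a x)) * (a + b) x ∂μ)
    (hv : ∫ x, b' x * (a + b) x ∂μ + dv * B b (a + b) =
      ∫ x, (σ (a x) * σ (b x) ^ 2 - (f + κ) * b x) * (a + b) x ∂μ) :
    ⟪a + b, a' + b'⟫_ℝ ≤ -(f + κ) * ‖a + b‖ ^ 2 + f * √(μ.real univ) * ‖a + b‖ +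
      (|dv - du| + κ) * ‖a‖ * ‖a + b‖ := by
  rw [L2.integral_mul_eq_inner, integral_reaction_u_mul hσ hσb] at hu
  rw [L2.integral_mul_eq_inner, integral_reaction_v_mul hσ hσb] at hv
  have hBb : B b (a + b) = B (a + b) (a + b) - B a (a + b) := by simp
  have hib : ⟪b, a + b⟫_ℝ = ‖a + b‖ ^ 2 - ⟪a, a + b⟫_ℝ := by
    rw [← real_inner_self_eq_norm_sq, inner_add_left (x := a)]; ring
  have hBa : (dv - du) * B a (a + b) ≤ |dv - du| * (‖a‖ * ‖a + b‖) :=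
    (le_abs_self _).trans (by rw [abs_mul]; gcongr)
  have hI := mul_le_mul_of_nonneg_left (L2.integral_le_sqrt_measureReal_mul_norm (a + b)) hf
  have hκa := mul_le_mul_of_nonneg_left (real_inner_le_norm a (a + b)) hκ
  rw [inner_add_right, real_inner_comm a', real_inner_comm b']
  nlinarith [mul_nonneg hdv hBpos]

end WeakForm

theorem two_mul_le_of_young {P W U U₀ m f κ D ε A B₀ C₀ : ℝ} (hm : 0 ≤ m) (hf : 0 ≤ f)
    (hDκ : 0 ≤ D + κ) (hε : 0 < ε)
    (hA : A = (1 - ε ^ 2) * (f + κ) - ε ^ 2 * D)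
    (hB₀ : B₀ = (1 / ε ^ 2) * (D + κ) * m + (f / ε ^ 2) * m)
    (hC₀ : C₀ = (1 / ε ^ 2) * (D + κ))
    (hP : P ≤ -(f + κ) * W ^ 2 + f * √m * W + (D + κ) * U * W) (hU : U ^ 2 ≤ U₀ ^ 2 + m) :
    2 * P ≤ -(2 * A) * W ^ 2 + (B₀ + C₀ * U₀ ^ 2) / 2 := by
  have hεB₀ : ε ^ 2 * B₀ = (D + κ) * m + f * m := by rw [hB₀]; field_simp
  have hεC₀ : ε ^ 2 * C₀ = D + κ := by rw [hC₀]; field_simp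
  have hYm : 4 * ε ^ 2 * (√m * W) ≤ 4 * ε ^ 4 * W ^ 2 + m := by
    nlinarith [sq_nonneg (2 * ε ^ 2 * W - √m), sq_sqrt hm]
  have hYU : 4 * ε ^ 2 * (U * W) ≤ 4 * ε ^ 4 * W ^ 2 + U ^ 2 := by
    nlinarith [sq_nonneg (2 * ε ^ 2 * W - U)]
  refine le_of_mul_le_mul_left ?_ (by positivity : 0 < 2 * ε ^ 2)
  rw [hA]
  nlinarith [mul_le_mul_of_nonneg_left hYm hf, mul_le_mul_of_nonneg_left hYU hDκ,
    mul_le_mul_of_nonneg_left hU hDκ]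

theorem norm_add_norm_le_of_sq_le {E : Type*} [SeminormedAddCommGroup E] {u v u₀ v₀ : E}
    {m A B₀ C₀ : ℝ} (hm : 0 ≤ m) (hA : 0 < A) (hB₀ : 0 ≤ B₀) (hC₀ : 0 ≤ C₀)
    (hu : ‖u‖ ^ 2 ≤ ‖u₀‖ ^ 2 + m)
    (hw : ‖u + v‖ ^ 2 ≤ ‖u₀ + v₀‖ ^ 2 + (B₀ + C₀ * ‖u₀‖ ^ 2) / 2 / (2 * A)) :
    ‖u‖ + ‖v‖ ≤ (3 + √(C₀ / A)) * (‖u₀‖ + ‖v₀‖) + √(B₀ / A) + 2 * √m := by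
  have hp := sq_sqrt (div_nonneg hB₀ hA.le)
  have hq := sq_sqrt (div_nonneg hC₀ hA.le)
  have hu' : ‖u‖ ≤ ‖u₀‖ + √m := le_of_sq_le_sq
    (by nlinarith [sq_sqrt hm, mul_nonneg (norm_nonneg u₀) (sqrt_nonneg m)]) (by positivity)
  have he : (B₀ + C₀ * ‖u₀‖ ^ 2) / 2 / (2 * A) = B₀ / A / 4 + C₀ / A / 4 * ‖u₀‖ ^ 2 := by
    field_simp; ring
  have hw' : ‖u + v‖ ≤ ‖u₀ + v₀‖ + √(B₀ / A) / 2 + √(C₀ / A) / 2 * ‖u₀‖ := by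
    refine le_of_sq_le_sq ?_ (by positivity)
    rw [he] at hw
    nlinarith [mul_nonneg (norm_nonneg (u₀ + v₀)) (sqrt_nonneg (B₀ / A)),
      mul_nonneg (norm_nonneg (u₀ + v₀)) (mul_nonneg (sqrt_nonneg (C₀ / A)) (norm_nonneg u₀)),
      mul_nonneg (sqrt_nonneg (B₀ / A)) (mul_nonneg (sqrt_nonneg (C₀ / A)) (norm_nonneg u₀))]
  have hv : ‖v‖ ≤ ‖u + v‖ + ‖u‖ := by simpa using norm_sub_le (u + v) u
  nlinarith [norm_add_le u₀ v₀, norm_nonneg v₀, sqrt_nonneg (B₀ / A),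
    mul_nonneg (sqrt_nonneg (C₀ / A)) (norm_nonneg u₀),
    mul_nonneg (sqrt_nonneg (C₀ / A)) (norm_nonneg v₀)]

end GrayScott

theorem apriori_L2_bound_general (L : ℝ) (hL : 0 < L) (M : ℝ)
    (σ : ℝ → ℝ) (hσ : ContDiff ℝ 1 σ)
    (hσb : ∀ z, |σ z| ≤ 2 * M) (hσsign : ∀ z, 0 ≤ σ z * z)
    (B : Lp ℝ 2 (muOmega L) →ₗ[ℝ] Lp ℝ 2 (muOmega L) →ₗ[ℝ] ℝ)
    (hBpos : ∀ w, 0 ≤ B w w) (hBbdd : ∀ w ψ, |B w ψ| ≤ ‖w‖ * ‖ψ‖)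
    (du dv f κ : ℝ) (hdu : 0 ≤ du) (hdv : 0 ≤ dv) (hf : 0 < f) (hκ : 0 < κ)
    (T : ℝ)
    (X : Submodule ℝ (Lp ℝ 2 (muOmega L)))
    (u u' v v' : ℝ → Lp ℝ 2 (muOmega L))
    (hud : ∀ t ∈ Icc (0:ℝ) T, HasDerivWithinAt u (u' t) (Icc 0 T) t)
    (hvd : ∀ t ∈ Icc (0:ℝ) T, HasDerivWithinAt v (v' t) (Icc 0 T) t)
    (hmem : ∀ t ∈ Icc (0:ℝ) T, u t ∈ X ∧ v t ∈ X)
    (hequ : ∀ t ∈ Icc (0:ℝ) T, ∀ φ ∈ X,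
      (∫ x, (u' t) x * φ x ∂muOmega L) + du * B (u t) φ =
        ∫ x, (-(σ ((u t) x)) * (σ ((v t) x)) ^ 2 + f * (1 - (u t) x)) * φ x
          ∂muOmega L)
    (heqv : ∀ t ∈ Icc (0:ℝ) T, ∀ φ ∈ X,
      (∫ x, (v' t) x * φ x ∂muOmega L) + dv * B (v t) φ =
        ∫ x, (σ ((u t) x) * (σ ((v t) x)) ^ 2 - (f + κ) * (v t) x) * φ x
          ∂muOmega L)
    (ε A B₀ C₀ : ℝ) (hε : 0 < ε)
    (hA : A = (1 - ε ^ 2) * (f + κ) - ε ^ 2 * |dv - du|) (hApos : 0 < A)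
    (hB₀ : B₀ = (1 / ε ^ 2) * (|dv - du| + κ) * (2 * L) + (f / ε ^ 2) * (2 * L))
    (hC₀ : C₀ = (1 / ε ^ 2) * (|dv - du| + κ)) :
    ∀ t ∈ Icc (0:ℝ) T,
      ‖u t‖ + ‖v t‖ ≤
        (3 + Real.sqrt (C₀ / A)) * (‖u 0‖ + ‖v 0‖) + Real.sqrt (B₀ / A) +
          2 * Real.sqrt (2 * L) := by
  have hσc := hσ.continuous
  have hm := muOmega_real_univ hL.le
  have hB₀pos : 0 ≤ B₀ := by rw [hB₀]; positivity
  have hC₀pos : 0 ≤ C₀ := by rw [hC₀]; positivity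
  have hu : ∀ t ∈ Icc (0:ℝ) T, ‖u t‖ ^ 2 ≤ ‖u 0‖ ^ 2 + 2 * L := by
    intro t ht
    have h := le_add_div_of_hasDerivWithinAt_le_neg_mul_add hf (by positivity : 0 ≤ f * (2 * L))
      (sq_nonneg ‖u 0‖) (fun s hs => (hud s hs).norm_sq) (fun s hs => ?_) t ht
    · rwa [mul_div_cancel_left₀ _ hf.ne'] at h
    · simpa [hm] using GrayScott.two_inner_deriv_le_of_weak_eq_u B hσc hσb hσsign hdu hf.le (hBpos _)
        (hequ s hs (u s) (hmem s hs).1)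
  have hw : ∀ t ∈ Icc (0:ℝ) T,
      ‖u t + v t‖ ^ 2 ≤ ‖u 0 + v 0‖ ^ 2 + (B₀ + C₀ * ‖u 0‖ ^ 2) / 2 / (2 * A) := by
    refine le_add_div_of_hasDerivWithinAt_le_neg_mul_add (by positivity) (by positivity)
      (sq_nonneg _) (fun t ht => ((hud t ht).add (hvd t ht)).norm_sq) (fun t ht => ?_)
    have hX := X.add_mem (hmem t ht).1 (hmem t ht).2
    refine GrayScott.two_mul_le_of_young (by positivity) hf.le (by positivity) hε hA hB₀ hC₀ ?_ (hu t ht)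
    rw [← hm]
    exact GrayScott.inner_deriv_add_le_of_weak_eq B hσc hσb hdv hf.le hκ.le (hBpos _) (hBbdd _ _)
      (hequ t ht _ hX) (heqv t ht _ hX)
  exact fun t ht =>
    GrayScott.norm_add_norm_le_of_sq_le (by positivity) hApos hB₀pos hC₀pos (hu t ht) (hw t ht)

/-- A priori `L²` bound for Galerkin-type solutions of the truncated nonlocal
Gray–Scott system:
`‖u(t)‖ + ‖v(t)‖ ≤ (3 + √(C₀/A)) (‖u(0)‖ + ‖v(0)‖) + √(B₀/A) + 2√(2L)` on `[0, T]`. -/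
theorem apriori_L2_bound (L : ℝ) (hL : 0 < L) (M : ℝ) (hM : 0 < M)
    (σ : ℝ → ℝ) (hσ : ContDiff ℝ 1 σ)
    (hσ'0 : ∀ z, 0 ≤ deriv σ z) (hσ'1 : ∀ z, deriv σ z ≤ 1)
    (hσb : ∀ z, |σ z| ≤ 2 * M) (hσsign : ∀ z, 0 ≤ σ z * z)
    (B : Lp ℝ 2 (muOmega L) →ₗ[ℝ] Lp ℝ 2 (muOmega L) →ₗ[ℝ] ℝ)
    (hBpos : ∀ w, 0 ≤ B w w) (hBbdd : ∀ w ψ, |B w ψ| ≤ ‖w‖ * ‖ψ‖)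
    (du dv f κ : ℝ) (hdu : 0 ≤ du) (hdv : 0 ≤ dv) (hf : 0 < f) (hκ : 0 < κ)
    (T : ℝ) (hT : 0 < T)
    (X : Submodule ℝ (Lp ℝ 2 (muOmega L)))
    (u u' v v' : ℝ → Lp ℝ 2 (muOmega L))
    (hu'cont : ContinuousOn u' (Icc 0 T)) (hv'cont : ContinuousOn v' (Icc 0 T))
    (hud : ∀ t ∈ Icc (0:ℝ) T, HasDerivWithinAt u (u' t) (Icc 0 T) t)
    (hvd : ∀ t ∈ Icc (0:ℝ) T, HasDerivWithinAt v (v' t) (Icc 0 T) t)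
    (hmem : ∀ t ∈ Icc (0:ℝ) T, u t ∈ X ∧ v t ∈ X)
    (hequ : ∀ t ∈ Icc (0:ℝ) T, ∀ φ ∈ X,
      (∫ x, (u' t) x * φ x ∂muOmega L) + du * B (u t) φ =
        ∫ x, (-(σ ((u t) x)) * (σ ((v t) x)) ^ 2 + f * (1 - (u t) x)) * φ x
          ∂muOmega L)
    (heqv : ∀ t ∈ Icc (0:ℝ) T, ∀ φ ∈ X,
      (∫ x, (v' t) x * φ x ∂muOmega L) + dv * B (v t) φ =
        ∫ x, (σ ((u t) x) * (σ ((v t) x)) ^ 2 - (f + κ) * (v t) x) * φ x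
          ∂muOmega L)
    (ε A B₀ C₀ : ℝ) (hε : 0 < ε)
    (hA : A = (1 - ε ^ 2) * (f + κ) - ε ^ 2 * |dv - du|) (hApos : 0 < A)
    (hB₀ : B₀ = (1 / ε ^ 2) * (|dv - du| + κ) * (2 * L) + (f / ε ^ 2) * (2 * L))
    (hC₀ : C₀ = (1 / ε ^ 2) * (|dv - du| + κ)) :
    ∀ t ∈ Icc (0:ℝ) T,
      ‖u t‖ + ‖v t‖ ≤
        (3 + Real.sqrt (C₀ / A)) * (‖u 0‖ + ‖v 0‖) + Real.sqrt (B₀ / A) +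
          2 * Real.sqrt (2 * L) :=
  apriori_L2_bound_general L hL M σ hσ hσb hσsign B hBpos hBbdd du dv f κ hdu hdv hf hκ T X u u' v
    v' hud hvd hmem hequ heqv ε A B₀ C₀ hε hA hApos hB₀ hC₀
end
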